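/- There is a universal constant C such that for every q ∈ S², ∫_{S²} (1/|p - q|) d vol_{S²}(p) ≤ C; consequently, if E ⊆ S² is closed with vol_{S²}(E) ≥ δ/2 > 0, then the averaged 1-form ξ_E(q) = (1/vol_{S²}(E)) ∫_E ξ_p(q) d vol_{S²}(p) satisfies dξ_E = vol_{S²}|_{S²∖E} and |ξ_E| ≤ C'/δ on S² ∖ E for a universal constant C'. -/

import Mathlib

/-!
A spherical cap of radius `r` has area `O(r²)`: the cone over it is covered by `O(1/r)` balls
of radius `2r`. Summing over the dyadic caps around `q` bounds `∫ |p - q|⁻¹`, and together with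
`|ξ_p(q)| ≤ 2 / |p - q|` (from `|p × q| ≤ |p - q|` and `1 - ⟨p, q⟩ = |p - q|² / 2`) this bounds
`ξ_E`. Off the compact set `E` the form `ξ_p` depends smoothly on the base point, uniformly in
`p ∈ E`, so one may differentiate under the integral sign: `dξ_E` is the average over `E` of
`dξ_p = vol`, which in spherical coordinates is the identity `∂_θ ξ_φ - ∂_φ ξ_θ = sin θ`.
-/

open MeasureTheory
open scoped RealInnerProductSpace

noncomputable section

/-- The unit sphere S² ⊂ ℝ³. -/
abbrev S2 : Set (EuclideanSpace ℝ (Fin 3)) := Metric.sphere 0 1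

/-- The surface (area) measure on S². -/
def sphereMeasure : Measure S2 := (volume : Measure (EuclideanSpace ℝ (Fin 3))).toSphere

/-- Cross product on ℝ³. -/
def crossE (u v : EuclideanSpace ℝ (Fin 3)) : EuclideanSpace ℝ (Fin 3) :=
  (WithLp.equiv 2 (Fin 3 → ℝ)).symm
    ![u 1 * v 2 - u 2 * v 1, u 2 * v 0 - u 0 * v 2, u 0 * v 1 - u 1 * v 0]

/-- The 1-form `ξ_p(q)·v = -⟨p × q, v⟩/(1 - ⟨p,q⟩)`, represented by the vector
`-(1 - ⟨p,q⟩)⁻¹ • (p × q)`. -/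
def xiVec (p q : EuclideanSpace ℝ (Fin 3)) : EuclideanSpace ℝ (Fin 3) :=
  -((1 - ⟪p, q⟫)⁻¹ • crossE p q)

/-- The averaged 1-form `ξ_E(q) = (1/vol(E)) ∫_E ξ_p(q) d vol_{S²}(p)`. -/
def xiAvg (E : Set S2) (q : EuclideanSpace ℝ (Fin 3)) : EuclideanSpace ℝ (Fin 3) :=
  (sphereMeasure E).toReal⁻¹ • ∫ p in E, xiVec (p : EuclideanSpace ℝ (Fin 3)) q ∂sphereMeasure

/-- Spherical coordinates `F(θ,φ)` on S². -/
def sphParamE (θ φ : ℝ) : EuclideanSpace ℝ (Fin 3) :=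
  (WithLp.equiv 2 (Fin 3 → ℝ)).symm
    ![Real.sin θ * Real.cos φ, Real.sin θ * Real.sin φ, Real.cos θ]

/-- `∂F/∂θ`. -/
def sphThetaE (θ φ : ℝ) : EuclideanSpace ℝ (Fin 3) :=
  (WithLp.equiv 2 (Fin 3 → ℝ)).symm
    ![Real.cos θ * Real.cos φ, Real.cos θ * Real.sin φ, -Real.sin θ]

/-- `∂F/∂φ`. -/
def sphPhiE (θ φ : ℝ) : EuclideanSpace ℝ (Fin 3) :=
  (WithLp.equiv 2 (Fin 3 → ℝ)).symm
    ![-Real.sin θ * Real.sin φ, Real.sin θ * Real.cos φ, 0]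

open Set Metric Filter Topology Function Real
open scoped ENNReal Pointwise

local notation "E3" => EuclideanSpace ℝ (Fin 3)

theorem ofReal_inv_dist_le_one_add_tsum {X : Type*} [PseudoMetricSpace X] (x p : X) :
    ENNReal.ofReal (dist p x)⁻¹ ≤
      1 + ∑' k : ℕ, (closedBall x ((2 : ℝ)⁻¹ ^ k)).indicator (fun _ => (2 : ℝ≥0∞) ^ (k + 1)) p := by
  rcases (dist_nonneg : 0 ≤ dist p x).eq_or_lt with hd | hd
  · simp [← hd]
  rcases le_or_gt 1 (dist p x) with hd1 | hd1
  · exact (ENNReal.ofReal_le_one.2 (inv_le_one_of_one_le₀ hd1)).trans le_self_add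
  obtain ⟨n, hn, hn'⟩ := exists_nat_pow_near (one_le_inv₀ hd |>.2 hd1.le) one_lt_two
  have hmem : p ∈ closedBall x ((2 : ℝ)⁻¹ ^ n) := by
    rw [mem_closedBall, inv_pow]
    exact (le_inv_comm₀ (by positivity) hd).1 hn
  calc ENNReal.ofReal (dist p x)⁻¹
      ≤ ENNReal.ofReal (2 ^ (n + 1)) := ENNReal.ofReal_le_ofReal hn'.le
    _ = (closedBall x ((2 : ℝ)⁻¹ ^ n)).indicator (fun _ => (2 : ℝ≥0∞) ^ (n + 1)) p := by
      rw [indicator_of_mem hmem, ENNReal.ofReal_pow zero_le_two, ENNReal.ofReal_ofNat]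
    _ ≤ _ := ENNReal.le_tsum n
    _ ≤ _ := le_add_self

theorem lintegral_inv_dist_le {X : Type*} [PseudoMetricSpace X] [MeasurableSpace X]
    [OpensMeasurableSpace X] (μ : Measure X) (x : X) (K : ℝ≥0∞)
    (hK : ∀ r : ℝ, 0 < r → r ≤ 1 → μ (closedBall x r) ≤ K * ENNReal.ofReal (r ^ 2)) :
    ∫⁻ p, ENNReal.ofReal (dist p x)⁻¹ ∂μ ≤ μ univ + 4 * K := by
  set B : ℕ → Set X := fun k => closedBall x ((2 : ℝ)⁻¹ ^ k)
  have hB : ∀ k, (2 : ℝ≥0∞) ^ (k + 1) * μ (B k) ≤ 2 * K * 2⁻¹ ^ k := fun k =>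
    calc (2 : ℝ≥0∞) ^ (k + 1) * μ (B k)
        ≤ 2 ^ (k + 1) * (K * ENNReal.ofReal (((2 : ℝ)⁻¹ ^ k) ^ 2)) := by
          gcongr; exact hK _ (by positivity) (pow_le_one₀ (by norm_num) (by norm_num))
      _ = 2 * K * 2⁻¹ ^ k * (2 ^ k * 2⁻¹ ^ k) := by
          rw [ENNReal.ofReal_pow (by positivity), ENNReal.ofReal_pow (by norm_num),
            ENNReal.ofReal_inv_of_pos two_pos, ENNReal.ofReal_ofNat]
          ring
      _ = 2 * K * 2⁻¹ ^ k := by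
          rw [← mul_pow, ENNReal.mul_inv_cancel two_ne_zero ENNReal.ofNat_ne_top, one_pow,
            mul_one]
  calc ∫⁻ p, ENNReal.ofReal (dist p x)⁻¹ ∂μ
      ≤ ∫⁻ p, (1 + ∑' k : ℕ, (B k).indicator (fun _ => (2 : ℝ≥0∞) ^ (k + 1)) p) ∂μ :=
        lintegral_mono (ofReal_inv_dist_le_one_add_tsum x)
    _ = μ univ + ∑' k : ℕ, (2 : ℝ≥0∞) ^ (k + 1) * μ (B k) := by
      rw [lintegral_add_left measurable_const, lintegral_one,
        lintegral_tsum fun k => (measurable_const.indicator measurableSet_closedBall).aemeasurable]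
      simp_rw [lintegral_indicator_const measurableSet_closedBall]
      rfl
    _ ≤ μ univ + ∑' k : ℕ, 2 * K * 2⁻¹ ^ k := add_le_add le_rfl (ENNReal.tsum_le_tsum hB)
    _ = μ univ + 4 * K := by
      rw [ENNReal.tsum_mul_left, ENNReal.tsum_geometric, ENNReal.one_sub_inv_two, inv_inv]
      ring

theorem Ioo_smul_subset_iUnion_closedBall {F : Type*} [NormedAddCommGroup F] [NormedSpace ℝ F]
    {x : F} (hx : ‖x‖ ≤ 1) {r : ℝ} (hr : 0 < r) {s : Set F} (hs : s ⊆ closedBall x r) :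
    Ioo (0 : ℝ) 1 • s ⊆
      ⋃ k ∈ Finset.range (⌊1 / r⌋₊ + 1), closedBall (((k : ℝ) * r) • x) (2 * r) := by
  rintro _ ⟨t, ⟨ht0, ht1⟩, p, hp, rfl⟩
  set k := ⌊t / r⌋₊
  have hkt : (k : ℝ) * r ≤ t := (le_div_iff₀ hr).1 (Nat.floor_le (by positivity))
  have htk : t < ((k : ℝ) + 1) * r := (div_lt_iff₀ hr).1 (Nat.lt_floor_add_one _)
  refine mem_biUnion (x := k) (Finset.mem_range_succ_iff.2 (Nat.floor_le_floor (by gcongr))) ?_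
  calc dist (t • p) (((k : ℝ) * r) • x)
      ≤ dist (t • p) (t • x) + dist (t • x) (((k : ℝ) * r) • x) := dist_triangle _ _ _
    _ = t * dist p x + (t - k * r) * ‖x‖ := by
      rw [dist_smul₀, dist_eq_norm (t • x), ← sub_smul, norm_smul, Real.norm_of_nonneg ht0.le,
        Real.norm_of_nonneg (sub_nonneg.2 hkt)]
    _ ≤ 1 * r + r * 1 := by
      gcongr
      · exact mem_closedBall.1 (hs hp)
      · linarith
    _ = 2 * r := by ring

theorem toSphere_closedBall_le {F : Type*} [NormedAddCommGroup F] [NormedSpace ℝ F]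
    [FiniteDimensional ℝ F] [MeasurableSpace F] [BorelSpace F] (μ : Measure F)
    [μ.IsAddHaarMeasure] {n : ℕ} (hn : Module.finrank ℝ F = n + 1) (x : sphere (0 : F) 1)
    {r : ℝ} (hr : 0 < r) (hr1 : r ≤ 1) :
    μ.toSphere (closedBall x r) ≤
      ENNReal.ofReal ((n + 1) * 2 ^ (n + 2)) * μ (ball 0 1) * ENNReal.ofReal (r ^ n) := by
  set N := ⌊1 / r⌋₊ + 1
  have hN : (N : ℝ) * r ≤ 2 := by
    have : (N : ℝ) ≤ 1 / r + 1 := by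
      push_cast [N]; linarith [Nat.floor_le (by positivity : 0 ≤ 1 / r)]
    calc (N : ℝ) * r ≤ (1 / r + 1) * r := by gcongr
      _ = 1 + r := by field_simp
      _ ≤ 2 := by linarith
  have hcone : μ (Ioo (0 : ℝ) 1 • (Subtype.val '' closedBall x r)) ≤
      N * (ENNReal.ofReal ((2 * r) ^ (n + 1)) * μ (ball 0 1)) := by
    have hsub := Ioo_smul_subset_iUnion_closedBall (norm_eq_of_mem_sphere x).le hr
      (s := Subtype.val '' closedBall x r) (by rintro _ ⟨p, hp, rfl⟩; exact hp)
    calc _ ≤ μ (⋃ k ∈ Finset.range N, closedBall (((k : ℝ) * r) • (x : F)) (2 * r)) :=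
          measure_mono hsub
      _ ≤ ∑ k ∈ Finset.range N, μ (closedBall (((k : ℝ) * r) • (x : F)) (2 * r)) :=
          measure_biUnion_finset_le _ _
      _ = N * (ENNReal.ofReal ((2 * r) ^ (n + 1)) * μ (ball 0 1)) := by
          simp only [μ.addHaar_closedBall _ (by positivity : (0 : ℝ) ≤ 2 * r), hn,
            Finset.sum_const, Finset.card_range, nsmul_eq_mul]
  rw [μ.toSphere_apply' measurableSet_closedBall, hn]
  calc ((n + 1 : ℕ) : ℝ≥0∞) * μ (Ioo (0 : ℝ) 1 • (Subtype.val '' closedBall x r))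
      ≤ (n + 1 : ℕ) * (N * (ENNReal.ofReal ((2 * r) ^ (n + 1)) * μ (ball 0 1))) := by
        gcongr
    _ = ENNReal.ofReal ((n + 1) * (N * r) * 2 ^ (n + 1) * r ^ n) * μ (ball 0 1) := by
        rw [← ENNReal.ofReal_natCast, ← ENNReal.ofReal_natCast N, ← mul_assoc,
          ← ENNReal.ofReal_mul (by positivity), ← mul_assoc,
          ← ENNReal.ofReal_mul (by positivity)]
        congr 2
        push_cast
        ring
    _ ≤ ENNReal.ofReal ((n + 1) * 2 * 2 ^ (n + 1) * r ^ n) * μ (ball 0 1) := by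
        gcongr
    _ = _ := by
        rw [mul_assoc _ (μ _), mul_comm (μ _), ← mul_assoc,
          ← ENNReal.ofReal_mul (by positivity)]
        congr 2
        ring

theorem hasDerivAt_setIntegral_of_continuousOn {X G : Type*} [TopologicalSpace X] [T2Space X]
    [MeasurableSpace X] [OpensMeasurableSpace X] [NormedAddCommGroup G] [NormedSpace ℝ G]
    {μ : Measure X} [IsFiniteMeasureOnCompacts μ] {K : Set X} (hK : IsCompact K)
    {W : Set (ℝ × X)} (hW : IsOpen W) {f f' : ℝ → X → G} {x₀ : ℝ}
    (hx₀ : {x₀} ×ˢ K ⊆ W) (hf : ContinuousOn (uncurry f) W)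
    (hf' : ContinuousOn (uncurry f') W)
    (hderiv : ∀ x ∈ W, HasDerivAt (f · x.2) (f' x.1 x.2) x.1) :
    IntegrableOn (f' x₀) K μ ∧
      HasDerivAt (fun s => ∫ p in K, f s p ∂μ) (∫ p in K, f' x₀ p ∂μ) x₀ := by
  obtain ⟨U, V, hU, -, hx₀U, hKV, hUV⟩ :=
    generalized_tube_lemma isCompact_singleton hK hW hx₀
  obtain ⟨ε, hε, hεU⟩ := nhds_basis_closedBall.mem_iff.1 (hU.mem_nhds (hx₀U rfl))
  have hsub : closedBall x₀ ε ×ˢ K ⊆ W := (prod_mono hεU hKV).trans hUV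
  have hslice : ∀ {g : ℝ → X → G}, ContinuousOn (uncurry g) W → ∀ s ∈ closedBall x₀ ε,
      IntegrableOn (g s) K μ := fun hg s hs =>
    (hg.comp (Continuous.prodMk_right s).continuousOn fun p hp => hsub ⟨hs, hp⟩
      ).integrableOn_compact hK
  obtain ⟨C, hC⟩ :=
    ((isCompact_closedBall x₀ ε).prod hK).exists_bound_of_continuousOn (hf'.mono hsub)
  have : IsFiniteMeasure (μ.restrict K) := isFiniteMeasure_restrict.2 hK.measure_ne_top
  refine hasDerivAt_integral_of_dominated_loc_of_deriv_le (ball_mem_nhds x₀ hε)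
    (bound := fun _ => C) ?_ (hslice hf x₀ (mem_closedBall_self hε.le))
    (hslice hf' x₀ (mem_closedBall_self hε.le)).aestronglyMeasurable ?_ (integrable_const C) ?_
  · filter_upwards [ball_mem_nhds x₀ hε] with s hs
    exact (hslice hf s (ball_subset_closedBall hs)).aestronglyMeasurable
  · filter_upwards [ae_restrict_mem hK.measurableSet] with p hp s hs
    exact hC (s, p) ⟨ball_subset_closedBall hs, hp⟩
  · filter_upwards [ae_restrict_mem hK.measurableSet] with p hp s hs
    exact hderiv (s, p) (hsub ⟨ball_subset_closedBall hs, hp⟩)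

theorem one_sub_inner_eq_norm_sub_sq_div_two {F : Type*} [NormedAddCommGroup F]
    [InnerProductSpace ℝ F] {p q : F} (hp : ‖p‖ = 1) (hq : ‖q‖ = 1) :
    1 - ⟪p, q⟫ = ‖p - q‖ ^ 2 / 2 := by
  rw [norm_sub_sq_real, hp, hq]; ring

theorem one_sub_inner_ne_zero {F : Type*} [NormedAddCommGroup F] [InnerProductSpace ℝ F]
    {p q : F} (hp : ‖p‖ = 1) (hq : ‖q‖ = 1) (h : p ≠ q) : 1 - ⟪p, q⟫ ≠ 0 := by
  rw [one_sub_inner_eq_norm_sub_sq_div_two hp hq]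
  exact div_ne_zero (pow_ne_zero 2 (norm_ne_zero_iff.2 (sub_ne_zero.2 h))) two_ne_zero

instance : IsFiniteMeasure sphereMeasure := by
  unfold sphereMeasure; infer_instance

theorem exists_lintegral_inv_dist_sphere_le :
    ∃ M : ℝ≥0∞, M ≠ ∞ ∧
      ∀ q : S2, ∫⁻ p, ENNReal.ofReal (dist p q)⁻¹ ∂sphereMeasure ≤ M := by
  set K := ENNReal.ofReal 48 * volume (ball (0 : E3) 1)
  refine ⟨sphereMeasure univ + 4 * K, ?_,
    fun q => lintegral_inv_dist_le _ q K fun r hr hr1 => ?_⟩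
  · exact ENNReal.add_ne_top.2 ⟨measure_ne_top _ _, ENNReal.mul_ne_top (by simp)
      (ENNReal.mul_ne_top ENNReal.ofReal_ne_top measure_ball_lt_top.ne)⟩
  · refine (toSphere_closedBall_le volume finrank_euclideanSpace_fin q hr hr1).trans_eq ?_
    congr 3; norm_num

theorem integrable_inv_dist_sphere (q : S2) :
    Integrable (fun p : S2 => (dist p q)⁻¹) sphereMeasure := by
  obtain ⟨M, hM, hle⟩ := exists_lintegral_inv_dist_sphere_le
  refine ⟨(continuous_id.dist continuous_const).measurable.inv.aestronglyMeasurable, ?_⟩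
  rw [hasFiniteIntegral_iff_ofReal (Eventually.of_forall fun p => by positivity)]
  exact (hle q).trans_lt hM.lt_top

theorem exists_integral_inv_dist_sphere_le :
    ∃ C : ℝ, 0 < C ∧ ∀ q : S2, ∫ p, (dist p q)⁻¹ ∂sphereMeasure ≤ C := by
  obtain ⟨M, hM, hle⟩ := exists_lintegral_inv_dist_sphere_le
  refine ⟨M.toReal + 1, by positivity, fun q => ?_⟩
  rw [integral_eq_lintegral_of_nonneg_ae (Eventually.of_forall fun p => by positivity)
    (integrable_inv_dist_sphere q).aestronglyMeasurable]
  linarith [ENNReal.toReal_mono hM (hle q)]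

theorem inner_eq_sum_three (x y : E3) : ⟪x, y⟫ = x 0 * y 0 + x 1 * y 1 + x 2 * y 2 := by
  simp only [PiLp.inner_apply, RCLike.inner_apply, conj_trivial, Fin.sum_univ_three]
  ring

theorem norm_sq_eq_sum_three (x : E3) : ‖x‖ ^ 2 = x 0 ^ 2 + x 1 ^ 2 + x 2 ^ 2 := by
  rw [← real_inner_self_eq_norm_sq, inner_eq_sum_three]; ring

theorem norm_crossE_sq (p q : E3) :
    ‖crossE p q‖ ^ 2 = ‖p‖ ^ 2 * ‖q‖ ^ 2 - ⟪p, q⟫ ^ 2 := by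
  simp only [norm_sq_eq_sum_three, inner_eq_sum_three, crossE, WithLp.equiv_symm_apply,
    Matrix.cons_val_zero, Matrix.cons_val_one, Matrix.cons_val]
  ring

@[fun_prop]
theorem Continuous.crossE {α : Type*} [TopologicalSpace α] {f g : α → E3} (hf : Continuous f)
    (hg : Continuous g) : Continuous fun x => crossE (f x) (g x) := by
  unfold _root_.crossE
  exact (PiLp.continuous_toLp 2 _).comp (by fun_prop)

theorem norm_crossE_le_dist {p q : E3} (hp : ‖p‖ = 1) (hq : ‖q‖ = 1) :
    ‖crossE p q‖ ≤ dist p q := by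
  have hD := one_sub_inner_eq_norm_sub_sq_div_two hp hq
  have hi : ⟪p, q⟫ ≤ 1 := (real_inner_le_norm p q).trans (by rw [hp, hq, one_mul])
  refine (pow_le_pow_iff_left₀ (norm_nonneg _) dist_nonneg two_ne_zero).1 ?_
  rw [norm_crossE_sq, hp, hq, dist_eq_norm]
  nlinarith

theorem norm_xiVec_le {p q : E3} (hp : ‖p‖ = 1) (hq : ‖q‖ = 1) :
    ‖xiVec p q‖ ≤ 2 * (dist p q)⁻¹ := by
  rcases eq_or_ne p q with rfl | hne
  · simp [xiVec, hp]
  have hd : 0 < dist p q := dist_pos.2 hne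
  have hD : 1 - ⟪p, q⟫ = dist p q ^ 2 / 2 := by
    rw [one_sub_inner_eq_norm_sub_sq_div_two hp hq, dist_eq_norm]
  calc ‖xiVec p q‖ = (dist p q ^ 2 / 2)⁻¹ * ‖crossE p q‖ := by
        rw [xiVec, norm_neg, norm_smul, hD, Real.norm_of_nonneg (by positivity)]
    _ ≤ (dist p q ^ 2 / 2)⁻¹ * dist p q := by gcongr; exact norm_crossE_le_dist hp hq
    _ = 2 * (dist p q)⁻¹ := by field_simp

theorem norm_xiVec_sphere_le (p q : S2) : ‖xiVec p q‖ ≤ 2 * (dist p q)⁻¹ :=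
  norm_xiVec_le (norm_eq_of_mem_sphere p) (norm_eq_of_mem_sphere q)

theorem integrable_xiVec (q : S2) : Integrable (fun p : S2 => xiVec p q) sphereMeasure := by
  refine ((integrable_inv_dist_sphere q).const_mul 2).mono' ?_
    (Eventually.of_forall fun p => norm_xiVec_sphere_le p q)
  unfold xiVec
  fun_prop

theorem norm_xiAvg_le {C δ : ℝ} (hC : ∀ q : S2, ∫ p, (dist p q)⁻¹ ∂sphereMeasure ≤ C)
    (hδ : 0 < δ) {E : Set S2} (hE : ENNReal.ofReal (δ / 2) ≤ sphereMeasure E) (q : S2) :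
    ‖xiAvg E q‖ ≤ 4 * C / δ := by
  have hμE : δ / 2 ≤ (sphereMeasure E).toReal :=
    (ENNReal.ofReal_le_iff_le_toReal (measure_ne_top _ _)).1 hE
  have hint := (integrable_inv_dist_sphere q).const_mul 2
  have hbound : ‖∫ p in E, xiVec p q ∂sphereMeasure‖ ≤ 2 * C :=
    calc ‖∫ p in E, xiVec p q ∂sphereMeasure‖
        ≤ ∫ p in E, 2 * (dist p q)⁻¹ ∂sphereMeasure :=
          norm_integral_le_of_norm_le hint.integrableOn
            (Eventually.of_forall fun p => norm_xiVec_sphere_le p q)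
      _ ≤ ∫ p, 2 * (dist p q)⁻¹ ∂sphereMeasure :=
          setIntegral_le_integral hint (Eventually.of_forall fun p => by positivity)
      _ ≤ 2 * C := by rw [integral_const_mul]; linarith [hC q]
  calc ‖xiAvg E q‖
      = (sphereMeasure E).toReal⁻¹ * ‖∫ p in E, xiVec p q ∂sphereMeasure‖ := by
        rw [xiAvg, norm_smul, norm_inv, Real.norm_of_nonneg ENNReal.toReal_nonneg]
    _ ≤ (δ / 2)⁻¹ * (2 * C) := by gcongr
    _ = 4 * C / δ := by field_simp; ring

theorem inner_xiAvg (E : Set S2) (q : S2) (v : E3) :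
    ⟪xiAvg E q, v⟫ =
      (sphereMeasure E).toReal⁻¹ * ∫ p in E, ⟪xiVec p q, v⟫ ∂sphereMeasure := by
  rw [xiAvg, real_inner_smul_left, real_inner_comm,
    ← integral_inner (integrable_xiVec q).integrableOn]
  simp_rw [real_inner_comm v]

theorem continuousOn_inner_xiVec {γ v : ℝ → E3} (hγ : Continuous γ) (hv : Continuous v)
    (hγ1 : ∀ s, ‖γ s‖ = 1) :
    ContinuousOn (fun x : ℝ × S2 => ⟪xiVec x.2 (γ x.1), v x.1⟫)
      {x | (x.2 : E3) ≠ γ x.1} := by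
  have hden : ContinuousOn (fun x : ℝ × S2 => (1 - ⟪(x.2 : E3), γ x.1⟫)⁻¹)
      {x | (x.2 : E3) ≠ γ x.1} :=
    ContinuousOn.inv₀ (by fun_prop)
      fun x hx => one_sub_inner_ne_zero (norm_eq_of_mem_sphere x.2) (hγ1 x.1) hx
  unfold xiVec
  exact ((hden.smul (by fun_prop)).neg).inner (by fun_prop)

theorem hasDerivAt_inner_xiAvg {E : Set S2} (hE : IsCompact E) {γ v : ℝ → E3}
    (hγ : Continuous γ) (hv : Continuous v) (hγ1 : ∀ s, ‖γ s‖ = 1) {f' : ℝ → S2 → ℝ}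
    (hf' : ContinuousOn (uncurry f') {x | (x.2 : E3) ≠ γ x.1})
    (hderiv : ∀ s (p : S2), (p : E3) ≠ γ s →
      HasDerivAt (fun s => ⟪xiVec p (γ s), v s⟫) (f' s p) s)
    {x₀ : ℝ} (hx₀ : γ x₀ ∉ Subtype.val '' E) :
    IntegrableOn (f' x₀) E sphereMeasure ∧
      HasDerivAt (fun s => ⟪xiAvg E (γ s), v s⟫)
        ((sphereMeasure E).toReal⁻¹ * ∫ p in E, f' x₀ p ∂sphereMeasure) x₀ := by
  have hW : IsOpen {x : ℝ × S2 | (x.2 : E3) ≠ γ x.1} :=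
    isOpen_ne_fun (by fun_prop) (by fun_prop)
  obtain ⟨hint, hderiv'⟩ := hasDerivAt_setIntegral_of_continuousOn hE hW
    (μ := sphereMeasure) (f := fun s (p : S2) => ⟪xiVec p (γ s), v s⟫)
    (by rintro ⟨s, p⟩ ⟨rfl, hp⟩ h; exact hx₀ ⟨p, hp, h⟩)
    (continuousOn_inner_xiVec hγ hv hγ1) hf' fun x hx => hderiv x.1 x.2 hx
  refine ⟨hint, ?_⟩
  have hγS : ∀ s, γ s ∈ S2 := fun s => mem_sphere_zero_iff_norm.2 (hγ1 s)
  simp_rw [fun s => inner_xiAvg E ⟨γ s, hγS s⟩ (v s)]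
  exact hderiv'.const_mul _

section SphericalCoordinates

variable {α : Type*} [TopologicalSpace α] {f g : α → ℝ}

@[fun_prop]
theorem Continuous.sphParamE (hf : Continuous f) (hg : Continuous g) :
    Continuous fun x => sphParamE (f x) (g x) := by
  unfold _root_.sphParamE
  exact (PiLp.continuous_toLp 2 _).comp (by fun_prop)

@[fun_prop]
theorem Continuous.sphThetaE (hf : Continuous f) (hg : Continuous g) :
    Continuous fun x => sphThetaE (f x) (g x) := by
  unfold _root_.sphThetaE
  exact (PiLp.continuous_toLp 2 _).comp (by fun_prop)

@[fun_prop]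
theorem Continuous.sphPhiE (hf : Continuous f) (hg : Continuous g) :
    Continuous fun x => sphPhiE (f x) (g x) := by
  unfold _root_.sphPhiE
  exact (PiLp.continuous_toLp 2 _).comp (by fun_prop)

end SphericalCoordinates

section SphericalFrame

variable (p : E3) (s t : ℝ)

/- The components of `p` in the orthonormal frame `F, ∂_θF, ∂_φF / sin θ` at `F = sphParamE s t`
are `sphRad`, `sphPolar`, `sphAzim`; `sphHoriz` is its component along `(cos t, sin t, 0)`. -/

def sphHoriz : ℝ := p 0 * cos t + p 1 * sin t

def sphAzim : ℝ := p 1 * cos t - p 0 * sin t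

def sphRad : ℝ := sin s * sphHoriz p t + cos s * p 2

def sphPolar : ℝ := cos s * sphHoriz p t - sin s * p 2

theorem inner_sphParamE : ⟪p, sphParamE s t⟫ = sphRad p s t := by
  simp only [inner_eq_sum_three, sphParamE, sphRad, sphHoriz, WithLp.equiv_symm_apply,
    Matrix.cons_val_zero, Matrix.cons_val_one, Matrix.cons_val]
  ring

theorem norm_sphParamE : ‖sphParamE s t‖ = 1 := by
  refine (pow_eq_one_iff_of_nonneg (norm_nonneg _) two_ne_zero).1 ?_
  simp only [norm_sq_eq_sum_three, sphParamE, WithLp.equiv_symm_apply, Matrix.cons_val_zero,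
    Matrix.cons_val_one, Matrix.cons_val]
  linear_combination sin s ^ 2 * sin_sq_add_cos_sq t + sin_sq_add_cos_sq s

theorem sphRad_sq_add_sphPolar_sq_add_sphAzim_sq :
    sphRad p s t ^ 2 + sphPolar p s t ^ 2 + sphAzim p t ^ 2 = ‖p‖ ^ 2 := by
  simp only [norm_sq_eq_sum_three, sphRad, sphPolar, sphAzim, sphHoriz]
  linear_combination ((p 0 * cos t + p 1 * sin t) ^ 2 + p 2 ^ 2) * sin_sq_add_cos_sq s
    + (p 0 ^ 2 + p 1 ^ 2) * sin_sq_add_cos_sq t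

theorem cos_mul_sphPolar_add_sin_mul_sphRad :
    cos s * sphPolar p s t + sin s * sphRad p s t = sphHoriz p t := by
  simp only [sphPolar, sphRad]
  linear_combination sphHoriz p t * sin_sq_add_cos_sq s

theorem inner_xiVec (q v : E3) : ⟪xiVec p q, v⟫ = -⟪crossE p q, v⟫ / (1 - ⟪p, q⟫) := by
  rw [xiVec, inner_neg_left, real_inner_smul_left]; ring

theorem inner_xiVec_sphPhiE :
    ⟪xiVec p (sphParamE s t), sphPhiE s t⟫ = sin s * sphPolar p s t / (1 - sphRad p s t) := by
  rw [inner_xiVec, inner_sphParamE]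
  congr 1
  simp only [inner_eq_sum_three, crossE, sphParamE, sphPhiE, sphPolar, sphHoriz,
    WithLp.equiv_symm_apply, Matrix.cons_val_zero, Matrix.cons_val_one, Matrix.cons_val]
  linear_combination -(p 2 * sin s ^ 2) * sin_sq_add_cos_sq t

theorem inner_xiVec_sphThetaE :
    ⟪xiVec p (sphParamE s t), sphThetaE s t⟫ = -sphAzim p t / (1 - sphRad p s t) := by
  rw [inner_xiVec, inner_sphParamE]
  congr 1
  simp only [inner_eq_sum_three, crossE, sphParamE, sphThetaE, sphAzim,
    WithLp.equiv_symm_apply, Matrix.cons_val_zero, Matrix.cons_val_one, Matrix.cons_val]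
  linear_combination (p 0 * sin t - p 1 * cos t) * sin_sq_add_cos_sq s

theorem hasDerivAt_sphRad_left : HasDerivAt (sphRad p · t) (sphPolar p s t) s :=
  (((hasDerivAt_sin s).mul_const _).add ((hasDerivAt_cos s).mul_const _)).congr_deriv
    (by simp only [sphPolar]; ring)

theorem hasDerivAt_sphPolar_left : HasDerivAt (sphPolar p · t) (-sphRad p s t) s :=
  (((hasDerivAt_cos s).mul_const _).sub ((hasDerivAt_sin s).mul_const _)).congr_deriv
    (by simp only [sphRad]; ring)

theorem hasDerivAt_sphHoriz : HasDerivAt (sphHoriz p ·) (sphAzim p t) t :=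
  (((hasDerivAt_cos t).const_mul _).add ((hasDerivAt_sin t).const_mul _)).congr_deriv
    (by simp only [sphAzim]; ring)

theorem hasDerivAt_sphAzim : HasDerivAt (sphAzim p ·) (-sphHoriz p t) t :=
  (((hasDerivAt_cos t).const_mul _).sub ((hasDerivAt_sin t).const_mul _)).congr_deriv
    (by simp only [sphHoriz]; ring)

theorem hasDerivAt_sphRad_right : HasDerivAt (sphRad p s ·) (sin s * sphAzim p t) t :=
  ((hasDerivAt_sphHoriz p t).const_mul _).add_const _

def derivThetaXiPhi : ℝ :=
  ((cos s * sphPolar p s t - sin s * sphRad p s t) * (1 - sphRad p s t)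
    + sin s * sphPolar p s t ^ 2) / (1 - sphRad p s t) ^ 2

def derivPhiXiTheta : ℝ :=
  (sphHoriz p t * (1 - sphRad p s t) - sin s * sphAzim p t ^ 2) / (1 - sphRad p s t) ^ 2

variable {p s t}

theorem hasDerivAt_inner_xiVec_sphPhiE (h : sphRad p s t ≠ 1) :
    HasDerivAt (fun s => ⟪xiVec p (sphParamE s t), sphPhiE s t⟫) (derivThetaXiPhi p s t) s := by
  simp_rw [inner_xiVec_sphPhiE]
  exact (((hasDerivAt_sin s).fun_mul (hasDerivAt_sphPolar_left p s t)).div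
    ((hasDerivAt_sphRad_left p s t).const_sub 1) (sub_ne_zero.2 h.symm)).congr_deriv
    (by simp only [derivThetaXiPhi]; ring)

theorem hasDerivAt_inner_xiVec_sphThetaE (h : sphRad p s t ≠ 1) :
    HasDerivAt (fun t => ⟪xiVec p (sphParamE s t), sphThetaE s t⟫)
      (derivPhiXiTheta p s t) t := by
  simp_rw [inner_xiVec_sphThetaE]
  exact ((hasDerivAt_sphAzim p t).fun_neg.div
    ((hasDerivAt_sphRad_right p s t).const_sub 1) (sub_ne_zero.2 h.symm)).congr_deriv
    (by simp only [derivPhiXiTheta]; ring)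

theorem derivThetaXiPhi_sub_derivPhiXiTheta (hp : ‖p‖ = 1) (h : sphRad p s t ≠ 1) :
    derivThetaXiPhi p s t - derivPhiXiTheta p s t = sin s := by
  have hnorm := sphRad_sq_add_sphPolar_sq_add_sphAzim_sq p s t
  rw [hp, one_pow] at hnorm
  rw [derivThetaXiPhi, derivPhiXiTheta, div_sub_div_same,
    div_eq_iff (pow_ne_zero 2 (sub_ne_zero.2 h.symm))]
  linear_combination (1 - sphRad p s t) * cos_mul_sphPolar_add_sin_mul_sphRad p s t
    + sin s * hnorm

theorem sphRad_ne_one (hp : ‖p‖ = 1) (h : p ≠ sphParamE s t) : sphRad p s t ≠ 1 := by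
  rw [← inner_sphParamE]
  exact fun h' => one_sub_inner_ne_zero hp (norm_sphParamE s t) h (by rw [h', sub_self])

end SphericalFrame

theorem continuousOn_derivThetaXiPhi (t : ℝ) :
    ContinuousOn (fun x : ℝ × S2 => derivThetaXiPhi x.2 x.1 t)
      {x | sphRad x.2 x.1 t ≠ 1} := by
  unfold derivThetaXiPhi sphPolar sphRad sphHoriz
  exact ContinuousOn.div (by fun_prop) (by fun_prop)
    fun x hx => pow_ne_zero 2 (sub_ne_zero.2 (Ne.symm hx))

theorem continuousOn_derivPhiXiTheta (s : ℝ) :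
    ContinuousOn (fun x : ℝ × S2 => derivPhiXiTheta x.2 s x.1)
      {x | sphRad x.2 s x.1 ≠ 1} := by
  unfold derivPhiXiTheta sphAzim sphRad sphHoriz
  exact ContinuousOn.div (by fun_prop) (by fun_prop)
    fun x hx => pow_ne_zero 2 (sub_ne_zero.2 (Ne.symm hx))

theorem deriv_inner_xiAvg_sub_deriv_inner_xiAvg {E : Set S2} (hE : IsCompact E)
    (hE0 : sphereMeasure E ≠ 0) {θ φ : ℝ} (h : sphParamE θ φ ∉ Subtype.val '' E) :
    deriv (fun s => ⟪xiAvg E (sphParamE s φ), sphPhiE s φ⟫) θ -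
      deriv (fun t => ⟪xiAvg E (sphParamE θ t), sphThetaE θ t⟫) φ = sin θ := by
  have hrad : ∀ {s t} (x : ℝ × S2), (x.2 : E3) ≠ sphParamE s t → sphRad x.2 s t ≠ 1 :=
    fun x hx => sphRad_ne_one (norm_eq_of_mem_sphere x.2) hx
  obtain ⟨hint₁, hd₁⟩ := hasDerivAt_inner_xiAvg hE (by fun_prop) (by fun_prop)
    (fun s => norm_sphParamE s φ) (f' := fun s p => derivThetaXiPhi p s φ)
    ((continuousOn_derivThetaXiPhi φ).mono fun x hx => hrad x hx)
    (fun s p hp => hasDerivAt_inner_xiVec_sphPhiE (hrad (s, p) hp)) h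
  obtain ⟨hint₂, hd₂⟩ := hasDerivAt_inner_xiAvg hE (by fun_prop) (by fun_prop)
    (fun t => norm_sphParamE θ t) (f' := fun t p => derivPhiXiTheta p θ t)
    ((continuousOn_derivPhiXiTheta θ).mono fun x hx => hrad x hx)
    (fun t p hp => hasDerivAt_inner_xiVec_sphThetaE (hrad (t, p) hp)) h
  rw [hd₁.deriv, hd₂.deriv, ← mul_sub, ← integral_sub hint₁ hint₂,
    setIntegral_congr_fun hE.measurableSet fun p hp => derivThetaXiPhi_sub_derivPhiXiTheta
      (norm_eq_of_mem_sphere p) (hrad (θ, p) fun h' => h ⟨p, hp, h'⟩),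
    setIntegral_const, smul_eq_mul, ← mul_assoc, measureReal_def,
    inv_mul_cancel₀ (ENNReal.toReal_ne_zero.2 ⟨hE0, measure_ne_top _ _⟩), one_mul]

/-- There is a universal constant `C` such that for every `q ∈ S²`,
`∫_{S²} |p - q|⁻¹ d vol_{S²}(p) ≤ C`. Consequently, if `E ⊆ S²` is closed with
`vol_{S²}(E) ≥ δ/2 > 0`, then the averaged 1-form `ξ_E` satisfies `|ξ_E| ≤ C'/δ` on
S² ∖ E for a universal constant `C'`, and `dξ_E = vol_{S²}` on S² ∖ E (expressed in
spherical coordinates: `∂_θ⟨ξ_E∘F, ∂_φF⟩ - ∂_φ⟨ξ_E∘F, ∂_θF⟩ = sin θ` wherever `F`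
avoids `E`, matching the pullback `F*vol_{S²} = sinθ dθ∧dφ`). -/
theorem averaged_one_form_bound_and_exterior_derivative :
    (∃ C : ℝ, 0 < C ∧ ∀ q : S2,
      ∫ p : S2, (dist (p : EuclideanSpace ℝ (Fin 3)) (q : EuclideanSpace ℝ (Fin 3)))⁻¹
        ∂sphereMeasure ≤ C) ∧
    (∃ C' : ℝ, 0 < C' ∧ ∀ δ : ℝ, 0 < δ → ∀ E : Set S2, IsClosed E →
      ENNReal.ofReal (δ/2) ≤ sphereMeasure E →
      (∀ q : S2, (q : EuclideanSpace ℝ (Fin 3)) ∉ Subtype.val '' E →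
        ‖xiAvg E (q : EuclideanSpace ℝ (Fin 3))‖ ≤ C'/δ) ∧
      (∀ θ φ : ℝ, sphParamE θ φ ∉ Subtype.val '' E →
        deriv (fun s => ⟪xiAvg E (sphParamE s φ), sphPhiE s φ⟫) θ -
          deriv (fun t => ⟪xiAvg E (sphParamE θ t), sphThetaE θ t⟫) φ =
            Real.sin θ)) := by
  obtain ⟨C, hC0, hC⟩ := exists_integral_inv_dist_sphere_le
  refine ⟨⟨C, hC0, hC⟩, 4 * C, by positivity, fun δ hδ E hE hEδ =>
    ⟨fun q _ => norm_xiAvg_le hC hδ hEδ q, fun θ φ h => ?_⟩⟩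
  have hE0 : sphereMeasure E ≠ 0 :=
    ((ENNReal.ofReal_pos.2 (half_pos hδ)).trans_le hEδ).ne'
  exact deriv_inner_xiAvg_sub_deriv_inner_xiAvg hE.isCompact hE0 h
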